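/- arXiv:2603.17650 — 2 statements merged into one kernel-verified Lean document; each statement's English description precedes it below -/
import Mathlib

section
/- Let α ∈ ℝ and let f_α : ℝ² \ {0} → ℝ be given by f_α(x₁,x₂) = (x₁² + x₂²)^{α/2}. Then for every x ≠ 0, ∑_{i,j=1}^{2} [ (∂²f_α/∂x_i²)(x)·(∂f_α/∂x_j)(x)² + 2·(∂f_α/∂x_i)(x)·(∂f_α/∂x_j)(x)·(∂²f_α/∂x_i∂x_j)(x) ] = α³(3α − 2)·(x₁² + x₂²)^{(3α−4)/2}. Consequently, f_α satisfies the symphonic equation on all of ℝ² \ {0} if and only if α = 0 or α = 2/3. -/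
/-!
Write `s = ‖x‖²`. For a radial function `φ(‖x‖²)` the gradient is `2 φ'(s) x` and the Hessian is
`2 φ'(s) I + 4 φ''(s) x xᵀ`, so on `ℝ^m` the symphonic expression collapses to
`8 φ'(s)² s ((m + 2) φ'(s) + 6 s φ''(s))`. For `φ(s) = s^{α/2}` this is
`α³ (3α + m - 4) s^{(3α-4)/2}`, which vanishes at one (hence every) point exactly when
`α = 0` or `α = (4 - m)/3`, that is, `α ∈ {0, 2/3}` in the plane.
-/

open scoped BigOperators

/-- Partial derivative `∂f/∂x_i` of a scalar function on `ℝ^m`. -/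
noncomputable def pd1 {m : ℕ} (f : (Fin m → ℝ) → ℝ) (i : Fin m) (x : Fin m → ℝ) : ℝ :=
  fderiv ℝ f x (Pi.single i 1)

open Filter Topology

noncomputable def symphonicOperator {m : ℕ} (f : (Fin m → ℝ) → ℝ) (x : Fin m → ℝ) : ℝ :=
  ∑ i, ∑ j, (pd1 (pd1 f i) i x * pd1 f j x ^ 2 + 2 * pd1 f i x * pd1 f j x * pd1 (pd1 f i) j x)

def sumSq {m : ℕ} (y : Fin m → ℝ) : ℝ := ∑ k, y k ^ 2

section RadialFunctions

variable {m : ℕ}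

theorem sumSq_fin_two (y : Fin 2 → ℝ) : sumSq y = y 0 ^ 2 + y 1 ^ 2 :=
  Fin.sum_univ_two _

theorem sumSq_pos {x : Fin m → ℝ} (hx : x ≠ 0) : 0 < sumSq x := by
  obtain ⟨k, hk⟩ := Function.ne_iff.1 hx
  replace hk : x k ≠ 0 := hk
  exact lt_of_lt_of_le (by positivity)
    (Finset.single_le_sum (fun j _ => sq_nonneg (x j)) (Finset.mem_univ k))

theorem hasFDerivAt_sumSq (x : Fin m → ℝ) :
    HasFDerivAt sumSq (∑ k, (2 * x k) • ContinuousLinearMap.proj k : (Fin m → ℝ) →L[ℝ] ℝ) x := by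
  refine HasFDerivAt.fun_sum fun k _ => ?_
  refine ((hasFDerivAt_apply (𝕜 := ℝ) k x).pow 2).congr_fderiv ?_
  ext v
  simp [mul_comm]

theorem continuous_sumSq : Continuous (sumSq : (Fin m → ℝ) → ℝ) :=
  continuous_iff_continuousAt.2 fun x => (hasFDerivAt_sumSq x).continuousAt

variable {φ φ' : ℝ → ℝ} {x : Fin m → ℝ}

theorem pd1_comp_sumSq {d : ℝ} (hφ : HasDerivAt φ d (sumSq x)) (i : Fin m) :
    pd1 (fun y => φ (sumSq y)) i x = 2 * d * x i := by
  have h : HasFDerivAt (fun y => φ (sumSq y))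
      (d • ∑ k, (2 * x k) • ContinuousLinearMap.proj k) x :=
    hφ.comp_hasFDerivAt x (hasFDerivAt_sumSq x)
  rw [pd1, h.fderiv]
  simp only [smul_apply, sum_apply, ContinuousLinearMap.proj_apply, Pi.single_apply, smul_eq_mul,
    mul_ite, mul_one, mul_zero, Finset.sum_ite_eq', Finset.mem_univ, if_true]
  ring

theorem pd1_pd1_comp_sumSq {φ'' : ℝ} (hφ : ∀ᶠ s in 𝓝 (sumSq x), HasDerivAt φ (φ' s) s)
    (hφ' : HasDerivAt φ' φ'' (sumSq x)) (i j : Fin m) :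
    pd1 (pd1 (fun y => φ (sumSq y)) i) j x
      = 2 * φ' (sumSq x) * (if i = j then 1 else 0) + 4 * φ'' * x i * x j := by
  have hloc : pd1 (fun y => φ (sumSq y)) i =ᶠ[𝓝 x] fun y => 2 * φ' (sumSq y) * y i :=
    ((continuous_sumSq.tendsto x).eventually hφ).mono fun y hy => pd1_comp_sumSq hy i
  have hderiv : HasFDerivAt (fun y => 2 * φ' (sumSq y) * y i) _ x :=
    ((hφ'.comp_hasFDerivAt x (hasFDerivAt_sumSq x)).const_mul 2).mul (hasFDerivAt_apply i x)
  rw [pd1, hloc.fderiv_eq, hderiv.fderiv]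
  simp only [Function.comp_apply, add_apply, smul_apply, sum_apply, ContinuousLinearMap.proj_apply,
    Pi.single_apply, smul_eq_mul, mul_ite, mul_one, mul_zero, Finset.sum_ite_eq', Finset.mem_univ,
    if_true]
  ring

/-- `tr(H) ‖g‖² + 2 ⟨g, H g⟩` for `g = 2a x` and `H = 2a I + 4b x xᵀ`. -/
theorem sum_sum_radial_symphonicOperator (a b : ℝ) (x : Fin m → ℝ) :
    ∑ i, ∑ j, ((2 * a + 4 * b * x i * x i) * (2 * a * x j) ^ 2
        + 2 * (2 * a * x i) * (2 * a * x j) * (2 * a * (if i = j then 1 else 0) + 4 * b * x i * x j))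
      = 8 * a ^ 2 * sumSq x * ((m + 2) * a + 6 * b * sumSq x) := by
  have hterm : ∀ i j, (2 * a + 4 * b * x i * x i) * (2 * a * x j) ^ 2
        + 2 * (2 * a * x i) * (2 * a * x j) * (2 * a * (if i = j then 1 else 0) + 4 * b * x i * x j)
      = 4 * a ^ 2 * (2 * a + 4 * b * x i ^ 2) * x j ^ 2 + 32 * a ^ 2 * b * x i ^ 2 * x j ^ 2
        + (if i = j then 16 * a ^ 3 * x i ^ 2 else 0) := by
    intro i j
    split_ifs with hij
    · subst hij; ring
    · ring
  simp only [hterm]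
  simp only [Finset.sum_add_distrib, ← Finset.mul_sum, ← Finset.sum_mul, Finset.sum_ite_eq,
    Finset.mem_univ, if_true, Finset.sum_const, Finset.card_univ, Fintype.card_fin, nsmul_eq_mul]
  unfold sumSq
  ring

theorem symphonicOperator_comp_sumSq {φ'' : ℝ} (hφ : ∀ᶠ s in 𝓝 (sumSq x), HasDerivAt φ (φ' s) s)
    (hφ' : HasDerivAt φ' φ'' (sumSq x)) :
    symphonicOperator (fun y => φ (sumSq y)) x
      = 8 * φ' (sumSq x) ^ 2 * sumSq x * ((m + 2) * φ' (sumSq x) + 6 * φ'' * sumSq x) := by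
  rw [symphonicOperator]
  simp only [pd1_comp_sumSq hφ.self_of_nhds, pd1_pd1_comp_sumSq hφ hφ', if_true, mul_one]
  exact sum_sum_radial_symphonicOperator _ _ x

theorem symphonicOperator_sumSq_rpow (α : ℝ) (hx : x ≠ 0) :
    symphonicOperator (fun y => sumSq y ^ (α / 2)) x
      = α ^ 3 * (3 * α + m - 4) * sumSq x ^ ((3 * α - 4) / 2) := by
  set s := sumSq x
  have hs : 0 < s := sumSq_pos hx
  have hφ : ∀ᶠ t in 𝓝 s, HasDerivAt (· ^ (α / 2)) (α / 2 * t ^ (α / 2 - 1)) t :=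
    (lt_mem_nhds hs).mono fun t ht => Real.hasDerivAt_rpow_const (Or.inl ht.ne')
  have hφ' : HasDerivAt (fun t => α / 2 * t ^ (α / 2 - 1))
      (α / 2 * ((α / 2 - 1) * s ^ (α / 2 - 1 - 1))) s :=
    (Real.hasDerivAt_rpow_const (Or.inl hs.ne')).const_mul _
  rw [symphonicOperator_comp_sumSq hφ hφ']
  have h1 : s ^ (α / 2 - 1 - 1) * s = s ^ (α / 2 - 1) := by
    rw [← Real.rpow_add_one hs.ne']; ring_nf
  have h3 : (s ^ (α / 2 - 1)) ^ 3 * s = s ^ ((3 * α - 4) / 2) := by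
    rw [← Real.rpow_natCast, ← Real.rpow_mul hs.le, ← Real.rpow_add_one hs.ne']; ring_nf
  linear_combination (8 * (α / 2) ^ 2 * (s ^ (α / 2 - 1)) ^ 2 * s * 6 * (α / 2) * (α / 2 - 1)) * h1
    + (α ^ 3 * (3 * α + m - 4)) * h3

theorem symphonicOperator_sumSq_rpow_eq_zero_iff (hm : 0 < m) (α : ℝ) :
    (∀ x : Fin m → ℝ, x ≠ 0 → symphonicOperator (fun y => sumSq y ^ (α / 2)) x = 0)
      ↔ α = 0 ∨ α = (4 - m) / 3 := by
  have hroots : α ^ 3 * (3 * α + m - 4) = 0 ↔ α = 0 ∨ α = (4 - m) / 3 := by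
    rw [mul_eq_zero, pow_eq_zero_iff three_ne_zero]
    exact or_congr_right ⟨fun h => by linarith, fun h => by linarith⟩
  rw [← hroots]
  refine ⟨fun h => ?_, fun h x hx => by rw [symphonicOperator_sumSq_rpow α hx, h, zero_mul]⟩
  have hone : (fun _ => 1 : Fin m → ℝ) ≠ 0 := fun h1 => one_ne_zero (congrFun h1 ⟨0, hm⟩)
  have hpos := Real.rpow_pos_of_pos (sumSq_pos hone) ((3 * α - 4) / 2)
  rw [← mul_eq_zero_iff_right hpos.ne', ← symphonicOperator_sumSq_rpow α hone, h _ hone]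

end RadialFunctions

/-- For `f_α(x₁,x₂) = (x₁² + x₂²)^{α/2}` on `ℝ² \ {0}`, the symphonic expression equals
`α³(3α − 2)(x₁² + x₂²)^{(3α−4)/2}`; consequently `f_α` is symphonic on `ℝ² \ {0}`
iff `α = 0` or `α = 2/3`. -/
theorem symphonic_radial_powers (α : ℝ) :
    let f : (Fin 2 → ℝ) → ℝ := fun y => (y 0 ^ 2 + y 1 ^ 2) ^ (α / 2)
    (∀ x : Fin 2 → ℝ, x ≠ 0 →
        ∑ i, ∑ j, (pd1 (pd1 f i) i x * pd1 f j x ^ 2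
            + 2 * pd1 f i x * pd1 f j x * pd1 (pd1 f i) j x)
          = α ^ 3 * (3 * α - 2) * (x 0 ^ 2 + x 1 ^ 2) ^ ((3 * α - 4) / 2))
      ∧ ((∀ x : Fin 2 → ℝ, x ≠ 0 →
            ∑ i, ∑ j, (pd1 (pd1 f i) i x * pd1 f j x ^ 2
              + 2 * pd1 f i x * pd1 f j x * pd1 (pd1 f i) j x) = 0)
          ↔ α = 0 ∨ α = 2 / 3) := by
  intro f
  have hf : f = fun y => sumSq y ^ (α / 2) := by simp only [f, sumSq_fin_two]
  change (∀ x : Fin 2 → ℝ, x ≠ 0 → symphonicOperator f x = _)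
    ∧ ((∀ x : Fin 2 → ℝ, x ≠ 0 → symphonicOperator f x = 0) ↔ _)
  rw [hf, symphonicOperator_sumSq_rpow_eq_zero_iff two_pos]
  refine ⟨fun x hx => ?_, by norm_num⟩
  rw [symphonicOperator_sumSq_rpow α hx, sumSq_fin_two]
  push_cast
  ring
end

section
/- Let φ : ℝ^m → ℝ^n be smooth and let v : ℝ^m → ℝ^n be smooth with compact support. Then the function F(t) = ∫_{ℝ^m} ( ‖(φ+tv)^*h‖²(x) − ‖φ^*h‖²(x) ) dx is well defined (the integrand is compactly supported for each t), F is differentiable at t = 0, and F'(0) = −4 ∫_{ℝ^m} ⟨ div σ_φ(x), v(x) ⟩ dx. -/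
open scoped BigOperators

/-- Partial derivative `∂φ/∂x_i` of a map `φ : ℝ^m → ℝ^n`. -/
noncomputable def pd {m n : ℕ} (φ : (Fin m → ℝ) → Fin n → ℝ) (i : Fin m) (x : Fin m → ℝ) :
    Fin n → ℝ :=
  fderiv ℝ φ x (Pi.single i 1)

/-- Euclidean inner product on `ℝ^n`. -/
def inn {n : ℕ} (u v : Fin n → ℝ) : ℝ := ∑ k, u k * v k

/-!
Write `g = φ^*h`. The Gram matrix of `φ + t v` is
`g_ij + t (⟨∂_i φ, ∂_j v⟩ + ⟨∂_i v, ∂_j φ⟩) + t² ⟨∂_i v, ∂_j v⟩`, so the integrand is a quartic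
polynomial in `t` whose coefficients are continuous and vanish outside `supp v`. Hence `F` is a
polynomial and `F'(0)` is the integral of the linear coefficient
`2 ∑ g_ij (⟨∂_i φ, ∂_j v⟩ + ⟨∂_i v, ∂_j φ⟩)`, which by the symmetry of `g` equals
`4 ∑_i ⟨σ_φ(e_i), ∂_i v⟩`. Integrating by parts in each direction `e_i` turns its integral into
`-4 ∫ ⟨div σ_φ, v⟩`.
-/

open MeasureTheory

theorem hasDerivAt_integral_quartic {α : Type*} [MeasurableSpace α] {μ : Measure α}
    {A B C D : α → ℝ} (hA : Integrable A μ) (hB : Integrable B μ) (hC : Integrable C μ)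
    (hD : Integrable D μ) :
    HasDerivAt (fun t => ∫ x, t * A x + t ^ 2 * B x + t ^ 3 * C x + t ^ 4 * D x ∂μ)
      (∫ x, A x ∂μ) 0 := by
  have hF : (fun t => ∫ x, t * A x + t ^ 2 * B x + t ^ 3 * C x + t ^ 4 * D x ∂μ) =
      fun t => t * ∫ x, A x ∂μ + t ^ 2 * ∫ x, B x ∂μ + t ^ 3 * ∫ x, C x ∂μ +
        t ^ 4 * ∫ x, D x ∂μ := by
    funext t
    rw [integral_add, integral_add, integral_add, integral_const_mul, integral_const_mul,
      integral_const_mul, integral_const_mul]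
    all_goals fun_prop
  rw [hF]
  simpa using ((((hasDerivAt_id' (0 : ℝ)).mul_const _).fun_add
    ((hasDerivAt_pow 2 (0 : ℝ)).mul_const _)).fun_add
    ((hasDerivAt_pow 3 (0 : ℝ)).mul_const _)).fun_add ((hasDerivAt_pow 4 (0 : ℝ)).mul_const _)

theorem hasDerivAt_integral_sum_sq_sub_sq {X ι : Type*} [TopologicalSpace X] [MeasurableSpace X]
    [OpensMeasurableSpace X] {μ : Measure X} [IsFiniteMeasureOnCompacts μ] [Fintype ι]
    {a b c : ι → X → ℝ} (ha : ∀ k, Continuous (a k)) (hb : ∀ k, Continuous (b k))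
    (hc : ∀ k, Continuous (c k)) (hbs : ∀ k, HasCompactSupport (b k))
    (hcs : ∀ k, HasCompactSupport (c k)) :
    HasDerivAt (fun t => ∫ x, ∑ k, ((a k x + t * b k x + t ^ 2 * c k x) ^ 2 - a k x ^ 2) ∂μ)
      (∫ x, ∑ k, 2 * a k x * b k x ∂μ) 0 := by
  have hintegrable {f : ι → X → ℝ} (hf : ∀ k, Continuous (f k))
      (hf0 : ∀ k x, b k x = 0 → c k x = 0 → f k x = 0) : Integrable (fun x => ∑ k, f k x) μ := by
    refine integrable_finsetSum _ fun k _ => (hf k).integrable_of_hasCompactSupport ?_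
    refine .intro' ((hbs k).union (hcs k)) ((isClosed_tsupport _).union (isClosed_tsupport _))
      fun x hx => ?_
    rw [Set.mem_union, not_or] at hx
    exact hf0 k x (image_eq_zero_of_notMem_tsupport hx.1) (image_eq_zero_of_notMem_tsupport hx.2)
  refine (hasDerivAt_integral_quartic
    (hintegrable (f := fun k x => 2 * a k x * b k x) (by fun_prop) fun k x hb _ => by simp [hb])
    (hintegrable (f := fun k x => b k x ^ 2 + 2 * a k x * c k x) (by fun_prop)
      fun k x hb hc => by simp [hb, hc])
    (hintegrable (f := fun k x => 2 * b k x * c k x) (by fun_prop)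
      fun k x hb hc => by simp [hb, hc])
    (hintegrable (f := fun k x => c k x ^ 2) (by fun_prop) fun k x _ hc => by simp [hc])
    ).congr_of_eventuallyEq (.of_forall fun t => integral_congr_ae (.of_forall fun x => ?_))
  simp only [Finset.mul_sum, ← Finset.sum_add_distrib]
  exact Finset.sum_congr rfl fun k _ => by ring

section Inn

variable {n : ℕ}

theorem inn_eq_dotProduct (u w : Fin n → ℝ) : inn u w = u ⬝ᵥ w := rfl

theorem sum_inn {ι : Type*} (s : Finset ι) (f : ι → Fin n → ℝ) (w : Fin n → ℝ) :
    inn (∑ i ∈ s, f i) w = ∑ i ∈ s, inn (f i) w :=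
  sum_dotProduct s f w

noncomputable def innL : (Fin n → ℝ) →L[ℝ] (Fin n → ℝ) →L[ℝ] ℝ :=
  ∑ k, (ContinuousLinearMap.mul ℝ ℝ).bilinearComp (ContinuousLinearMap.proj k)
    (ContinuousLinearMap.proj k)

@[simp]
theorem innL_apply (u w : Fin n → ℝ) : innL u w = inn u w := by
  simp [innL, inn]

theorem ContDiff.inn {E : Type*} [NormedAddCommGroup E] [NormedSpace ℝ E] {k : WithTop ℕ∞}
    {f g : E → Fin n → ℝ} (hf : ContDiff ℝ k f) (hg : ContDiff ℝ k g) :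
    ContDiff ℝ k fun x => inn (f x) (g x) := by
  simpa using (innL.contDiff.comp hf).clm_apply hg

variable {X : Type*} [TopologicalSpace X] {f g : X → Fin n → ℝ}

theorem Continuous.inn (hf : Continuous f) (hg : Continuous g) :
    Continuous fun x => inn (f x) (g x) :=
  hf.dotProduct hg

theorem HasCompactSupport.inn_left (hf : HasCompactSupport f) :
    HasCompactSupport fun x => inn (f x) (g x) :=
  hf.mono fun x hx hfx => hx (by simp [hfx, inn])

theorem HasCompactSupport.inn_right (hg : HasCompactSupport g) :
    HasCompactSupport fun x => inn (f x) (g x) :=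
  hg.mono fun x hx hgx => hx (by simp [hgx, inn])

end Inn

section PartialDerivative

variable {m n : ℕ}

theorem ContDiff.pd {k : WithTop ℕ∞} {φ : (Fin m → ℝ) → Fin n → ℝ} (hφ : ContDiff ℝ (k + 1) φ)
    (i : Fin m) : ContDiff ℝ k (pd φ i) :=
  (hφ.fderiv_right le_rfl).clm_apply contDiff_const

theorem HasCompactSupport.pd {φ : (Fin m → ℝ) → Fin n → ℝ} (hφ : HasCompactSupport φ)
    (i : Fin m) : HasCompactSupport (pd φ i) :=
  hφ.fderiv_apply ℝ (Pi.single i 1)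

theorem pd_of_notMem_tsupport {φ : (Fin m → ℝ) → Fin n → ℝ} {x : Fin m → ℝ}
    (hx : x ∉ tsupport φ) (i : Fin m) : pd φ i x = 0 := by
  simp [pd, fderiv_of_notMem_tsupport ℝ hx]

theorem pd_add_smul {φ v : (Fin m → ℝ) → Fin n → ℝ} {x : Fin m → ℝ}
    (hφ : DifferentiableAt ℝ φ x) (hv : DifferentiableAt ℝ v x) (t : ℝ) (i : Fin m) :
    pd (fun y => φ y + t • v y) i x = pd φ i x + t • pd v i x := by
  simp only [pd]
  rw [fderiv_fun_add (g := fun y => t • v y) hφ (hv.const_smul t), fderiv_fun_const_smul hv t]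
  rfl

theorem integral_inn_pd_eq_neg {f v : (Fin m → ℝ) → Fin n → ℝ} (hf : ContDiff ℝ 1 f)
    (hv : ContDiff ℝ 1 v) (hvs : HasCompactSupport v) (i : Fin m) :
    ∫ x, inn (f x) (pd v i x) = -∫ x, inn (pd f i x) (v x) := by
  have hf'v : Integrable fun x => inn (pd f i x) (v x) :=
    ((hf.pd (k := 0) i).continuous.inn hv.continuous).integrable_of_hasCompactSupport
      hvs.inn_right
  have hfv' : Integrable fun x => inn (f x) (pd v i x) :=
    (hf.continuous.inn (hv.pd (k := 0) i).continuous).integrable_of_hasCompactSupport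
      (hvs.pd i).inn_right
  have hfv : Integrable fun x => inn (f x) (v x) :=
    (hf.continuous.inn hv.continuous).integrable_of_hasCompactSupport hvs.inn_right
  simpa [pd] using integral_bilinear_fderiv_right_eq_neg_left_of_integrable (B := innL)
    (v := Pi.single i 1) (by simpa [pd] using hf'v) (by simpa [pd] using hfv')
    (by simpa using hfv) (fun x _ => hf.differentiable one_ne_zero x)
    (fun x _ => hv.differentiable one_ne_zero x)

theorem integral_sum_inn_pd_eq_neg_integral_inn_sum_pd {σ : Fin m → (Fin m → ℝ) → Fin n → ℝ}
    {v : (Fin m → ℝ) → Fin n → ℝ} (hσ : ∀ i, ContDiff ℝ 1 (σ i)) (hv : ContDiff ℝ 1 v)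
    (hvs : HasCompactSupport v) :
    ∫ x, ∑ i, inn (σ i x) (pd v i x) = -∫ x, inn (∑ i, pd (σ i) i x) (v x) := by
  have hσv' (i : Fin m) : Integrable fun x => inn (σ i x) (pd v i x) :=
    ((hσ i).continuous.inn (hv.pd (k := 0) i).continuous).integrable_of_hasCompactSupport
      (hvs.pd i).inn_right
  have hσ'v (i : Fin m) : Integrable fun x => inn (pd (σ i) i x) (v x) :=
    (((hσ i).pd (k := 0) i).continuous.inn hv.continuous).integrable_of_hasCompactSupport
      hvs.inn_right
  simp only [sum_inn]
  rw [integral_finsetSum _ fun i _ => hσv' i, integral_finsetSum _ fun i _ => hσ'v i,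
    ← Finset.sum_neg_distrib]
  exact Finset.sum_congr rfl fun i _ => integral_inn_pd_eq_neg (hσ i) hv hvs i

end PartialDerivative

section Symphonic

variable {m n : ℕ}

/-- `pdGram φ φ` is the pullback metric `φ^*h` in coordinates. -/
noncomputable def pdGram (φ ψ : (Fin m → ℝ) → Fin n → ℝ) (i j : Fin m) (x : Fin m → ℝ) : ℝ :=
  inn (pd φ i x) (pd ψ j x)

noncomputable def symphonicDensity (φ : (Fin m → ℝ) → Fin n → ℝ) (x : Fin m → ℝ) : ℝ :=
  ∑ i, ∑ j, pdGram φ φ i j x ^ 2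

noncomputable def symphonicStress (φ : (Fin m → ℝ) → Fin n → ℝ) (i : Fin m) (x : Fin m → ℝ) :
    Fin n → ℝ :=
  ∑ j, pdGram φ φ i j x • pd φ j x

variable {φ ψ v : (Fin m → ℝ) → Fin n → ℝ}

theorem ContDiff.pdGram {k : WithTop ℕ∞} (hφ : ContDiff ℝ (k + 1) φ) (hψ : ContDiff ℝ (k + 1) ψ)
    (i j : Fin m) : ContDiff ℝ k (pdGram φ ψ i j) :=
  (hφ.pd i).inn (hψ.pd j)

theorem continuous_pdGram (hφ : ContDiff ℝ 1 φ) (hψ : ContDiff ℝ 1 ψ) (i j : Fin m) :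
    Continuous (pdGram φ ψ i j) :=
  (hφ.pdGram (k := 0) hψ i j).continuous

theorem HasCompactSupport.pdGram_left (hφ : HasCompactSupport φ) (i j : Fin m) :
    HasCompactSupport (pdGram φ ψ i j) :=
  (hφ.pd i).inn_left

theorem HasCompactSupport.pdGram_right (hψ : HasCompactSupport ψ) (i j : Fin m) :
    HasCompactSupport (pdGram φ ψ i j) :=
  (hψ.pd j).inn_right

theorem ContDiff.symphonicStress {k : WithTop ℕ∞} (hφ : ContDiff ℝ (k + 1) φ) (i : Fin m) :
    ContDiff ℝ k (symphonicStress φ i) :=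
  ContDiff.sum fun j _ => (hφ.pdGram hφ i j).smul (hφ.pd j)

theorem pdGram_add_smul (hφ : Differentiable ℝ φ) (hv : Differentiable ℝ v) (t : ℝ)
    (i j : Fin m) (x : Fin m → ℝ) :
    pdGram (fun y => φ y + t • v y) (fun y => φ y + t • v y) i j x =
      pdGram φ φ i j x + t * (pdGram φ v i j x + pdGram v φ i j x) + t ^ 2 * pdGram v v i j x := by
  simp only [pdGram, pd_add_smul (hφ x) (hv x), inn_eq_dotProduct, add_dotProduct,
    dotProduct_add, smul_dotProduct, dotProduct_smul, smul_eq_mul]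
  ring

theorem symphonicDensity_add_smul_sub (hφ : Differentiable ℝ φ) (hv : Differentiable ℝ v)
    (t : ℝ) (x : Fin m → ℝ) :
    symphonicDensity (fun y => φ y + t • v y) x - symphonicDensity φ x =
      ∑ p : Fin m × Fin m, ((pdGram φ φ p.1 p.2 x + t * (pdGram φ v p.1 p.2 x +
        pdGram v φ p.1 p.2 x) + t ^ 2 * pdGram v v p.1 p.2 x) ^ 2 - pdGram φ φ p.1 p.2 x ^ 2) := by
  simp only [symphonicDensity, pdGram_add_smul hφ hv, Fintype.sum_prod_type,
    Finset.sum_sub_distrib]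

theorem hasCompactSupport_symphonicDensity_add_smul_sub (hφ : Differentiable ℝ φ)
    (hv : Differentiable ℝ v) (hvs : HasCompactSupport v) (t : ℝ) :
    HasCompactSupport fun x => symphonicDensity (fun y => φ y + t • v y) x - symphonicDensity φ x :=
  .intro' hvs (isClosed_tsupport v) fun x hx => by
    simp [symphonicDensity_add_smul_sub hφ hv, pdGram, pd_of_notMem_tsupport hx, inn]

theorem sum_two_mul_pdGram_mul_add (φ v : (Fin m → ℝ) → Fin n → ℝ) (x : Fin m → ℝ) :
    ∑ p : Fin m × Fin m, 2 * pdGram φ φ p.1 p.2 x * (pdGram φ v p.1 p.2 x + pdGram v φ p.1 p.2 x) =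
      4 * ∑ i, inn (symphonicStress φ i x) (pd v i x) := by
  have hsymm (i j : Fin m) : pdGram φ φ i j x = pdGram φ φ j i x := dotProduct_comm _ _
  have hswap (i j : Fin m) : pdGram v φ i j x = pdGram φ v j i x := dotProduct_comm _ _
  have hstress (i : Fin m) :
      inn (symphonicStress φ i x) (pd v i x) = ∑ j, pdGram φ φ i j x * pdGram φ v j i x := by
    rw [symphonicStress, sum_inn]
    exact Finset.sum_congr rfl fun j _ => smul_dotProduct _ _ _
  have htranspose : ∑ i, ∑ j, 2 * pdGram φ φ i j x * pdGram φ v i j x =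
      ∑ i, ∑ j, 2 * pdGram φ φ i j x * pdGram φ v j i x := by
    rw [Finset.sum_comm]
    exact Finset.sum_congr rfl fun i _ => Finset.sum_congr rfl fun j _ => by rw [hsymm]
  simp only [Fintype.sum_prod_type, hstress, hswap, mul_add, Finset.sum_add_distrib]
  rw [htranspose, ← two_mul]
  simp only [Finset.mul_sum]
  exact Finset.sum_congr rfl fun i _ => Finset.sum_congr rfl fun j _ => by ring

end Symphonic

/-- First variation of the symphonic energy: for smooth `φ : ℝ^m → ℝ^n` and smooth compactly
supported `v`, the function `F(t) = ∫ (‖(φ+tv)^*h‖² − ‖φ^*h‖²)` has compactly supported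
integrand for each `t`, and is differentiable at `t = 0` with
`F'(0) = −4 ∫ ⟨div σ_φ, v⟩`. -/
theorem symphonic_first_variation (m n : ℕ) (φ v : (Fin m → ℝ) → Fin n → ℝ)
    (hφ : ContDiff ℝ (⊤ : ℕ∞) φ) (hv : ContDiff ℝ (⊤ : ℕ∞) v) (hvs : HasCompactSupport v) :
    (∀ t : ℝ, HasCompactSupport fun x : Fin m → ℝ =>
        (∑ i, ∑ j, inn (pd (fun y => φ y + t • v y) i x) (pd (fun y => φ y + t • v y) j x) ^ 2)
          - ∑ i, ∑ j, inn (pd φ i x) (pd φ j x) ^ 2)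
      ∧ HasDerivAt (fun t : ℝ => ∫ x : Fin m → ℝ,
            ((∑ i, ∑ j,
                inn (pd (fun y => φ y + t • v y) i x) (pd (fun y => φ y + t • v y) j x) ^ 2)
              - ∑ i, ∑ j, inn (pd φ i x) (pd φ j x) ^ 2))
          (-4 * ∫ x : Fin m → ℝ,
            inn (∑ i, pd (fun y => ∑ j, inn (pd φ i y) (pd φ j y) • pd φ j y) i x) (v x)) 0 := by
  have hφ2 : ContDiff ℝ 2 φ := hφ.of_le (by norm_cast)
  have hv1 : ContDiff ℝ 1 v := hv.of_le (by norm_cast)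
  have hφ1 : ContDiff ℝ 1 φ := hφ.of_le (by norm_cast)
  have hφd := hφ2.differentiable two_ne_zero
  have hvd := hv1.differentiable one_ne_zero
  refine ⟨hasCompactSupport_symphonicDensity_add_smul_sub hφd hvd hvs, ?_⟩
  have hderiv := hasDerivAt_integral_sum_sq_sub_sq (μ := volume)
    (a := fun p : Fin m × Fin m => pdGram φ φ p.1 p.2)
    (b := fun p x => pdGram φ v p.1 p.2 x + pdGram v φ p.1 p.2 x) (c := fun p => pdGram v v p.1 p.2)
    (fun p => continuous_pdGram hφ1 hφ1 p.1 p.2)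
    (fun p => (continuous_pdGram hφ1 hv1 p.1 p.2).add (continuous_pdGram hv1 hφ1 p.1 p.2))
    (fun p => continuous_pdGram hv1 hv1 p.1 p.2)
    (fun p => (hvs.pdGram_right p.1 p.2).add (hvs.pdGram_left p.1 p.2))
    (fun p => hvs.pdGram_left p.1 p.2)
  refine (hderiv.congr_of_eventuallyEq (.of_forall fun t => integral_congr_ae
    (.of_forall (symphonicDensity_add_smul_sub hφd hvd t)))).congr_deriv ?_
  calc _ = 4 * ∫ x, ∑ i, inn (symphonicStress φ i x) (pd v i x) := by
        rw [integral_congr_ae (.of_forall (sum_two_mul_pdGram_mul_add φ v)), integral_const_mul]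
    _ = -4 * ∫ x, inn (∑ i, pd (symphonicStress φ i) i x) (v x) := by
        rw [integral_sum_inn_pd_eq_neg_integral_inn_sum_pd (fun i => hφ2.symphonicStress i) hv1 hvs]
        ring
end
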